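/- Let C be a symmetric (or braided) monoidal category with unit object 𝟙 and let e : 𝟙 ⟶ R be an idempotent morphism. Then the identity is the only unit-preserving endomorphism of R: any morphism f : R ⟶ R with e ≫ f = e equals id_R. -/

import Mathlib

open CategoryTheory MonoidalCategory

/-!
Write `g := (λ_ R)⁻¹ ≫ (e ▷ R)`. From `e ≫ f = e` we get `g ≫ (f ▷ R) = g`, so `f ▷ R = 𝟙` since `g`
is an isomorphism; the braiding turns this into `R ◁ f = 𝟙`. Naturality of `g` in its argument gives
`f ≫ g = g ≫ (R ◁ f) = g`, and cancelling `g` once more yields `f = 𝟙`.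
-/

namespace CategoryTheory.MonoidalCategory

variable {C : Type*} [Category C] [MonoidalCategory C]

lemma leftUnitor_inv_whiskerRight_naturality {A X Y : C} (e : 𝟙_ C ⟶ A) (f : X ⟶ Y) :
    f ≫ (λ_ Y).inv ≫ e ▷ Y = ((λ_ X).inv ≫ e ▷ X) ≫ A ◁ f := by
  rw [← Category.assoc, leftUnitor_inv_naturality, Category.assoc, whisker_exchange,
    Category.assoc]

lemma whiskerRight_eq_id_of_isIso_of_comp_eq {R : C} (e : 𝟙_ C ⟶ R)
    (he : IsIso ((λ_ R).inv ≫ e ▷ R)) {f : R ⟶ R} (hf : e ≫ f = e) : f ▷ R = 𝟙 (R ⊗ R) := by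
  rw [← cancel_epi ((λ_ R).inv ≫ e ▷ R), Category.assoc, ← comp_whiskerRight, hf,
    Category.comp_id]

lemma whiskerLeft_eq_id_of_whiskerRight_eq_id [BraidedCategory C] {X : C} (Y : C) {f : X ⟶ X}
    (hf : f ▷ Y = 𝟙 (X ⊗ Y)) : Y ◁ f = 𝟙 (Y ⊗ X) := by
  rw [← cancel_epi (β_ X Y).hom, ← BraidedCategory.braiding_naturality_left, hf,
    Category.id_comp, Category.comp_id]

end CategoryTheory.MonoidalCategory

/-- In a braided (e.g. symmetric) monoidal category, if `e : 𝟙 ⟶ R` is idempotent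
(i.e. `(λ_R)⁻¹ ≫ (e ▷ R)` is an isomorphism), then the identity is the only
unit-preserving endomorphism of `R`: any `f : R ⟶ R` with `e ≫ f = e` is `id_R`. -/
theorem endomorphism_of_idempotent_is_id {C : Type*} [Category C] [MonoidalCategory C]
    [BraidedCategory C] {R : C} (e : 𝟙_ C ⟶ R)
    (he : IsIso ((λ_ R).inv ≫ (e ▷ R)))
    (f : R ⟶ R) (hf : e ≫ f = e) : f = 𝟙 R := by
  have hfR : R ◁ f = 𝟙 (R ⊗ R) :=
    whiskerLeft_eq_id_of_whiskerRight_eq_id R (whiskerRight_eq_id_of_isIso_of_comp_eq e he hf)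
  rw [← cancel_mono ((λ_ R).inv ≫ e ▷ R), leftUnitor_inv_whiskerRight_naturality, hfR,
    Category.comp_id, Category.id_comp]
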